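/- arXiv:2104.11185 — 6 statements merged into one kernel-verified Lean document; each statement's English description precedes it below -/
import Mathlib

section
/- Let f : E → [0,∞] be upper semicontinuous and upper radial. Then for every (x,u) ∈ hypo f and every proximal normal (ζ,δ) ∈ N^P_{hypo f}((x,u)) with ζ ≠ 0, the quantity R(f) is finite and ⟨ζ,x⟩ + δ·u ≥ ‖ζ‖·R(f). -/
open scoped ENNReal RealInnerProductSpace Pointwise
open Metric Set

variable {E : Type*} [NormedAddCommGroup E] [InnerProductSpace ℝ E] [FiniteDimensional ℝ E]

/-- The hypograph of `f`, viewed inside `E × (0,∞)`. -/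
def hypo (f : E → ℝ≥0∞) : Set (E × ℝ) := {p | 0 < p.2 ∧ ENNReal.ofReal p.2 ≤ f p.1}

/-- The epigraph of `f`, viewed inside `E × (0,∞)`. -/
def epigraph (f : E → ℝ≥0∞) : Set (E × ℝ) := {p | 0 < p.2 ∧ f p.1 ≤ ENNReal.ofReal p.2}

/-- `f` is upper semicontinuous: its hypograph is closed in `E × (0,∞)`. -/
def IsUSC (f : E → ℝ≥0∞) : Prop := closure (hypo f) ∩ {p : E × ℝ | 0 < p.2} ⊆ hypo f

/-- The perspective function `(y, v) ↦ v ⬝ f(y/v)`. -/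
noncomputable def persp (f : E → ℝ≥0∞) (p : E × ℝ) : ℝ≥0∞ :=
  ENNReal.ofReal p.2 * f (p.2⁻¹ • p.1)

/-- `f` is upper radial: its perspective function is u.s.c. on `E × (0,∞)` and
nondecreasing in `v`. -/
def UpperRadial (f : E → ℝ≥0∞) : Prop :=
  UpperSemicontinuousOn (persp f) {p : E × ℝ | 0 < p.2} ∧
  ∀ (y : E) (v v' : ℝ), 0 < v → v ≤ v' → persp f (y, v) ≤ persp f (y, v')

/-- `f` is strictly upper radial. -/
def StrictlyUpperRadial (f : E → ℝ≥0∞) : Prop :=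
  UpperRadial f ∧ ∀ (y : E) (v v' : ℝ), 0 < v → v < v' →
    0 < persp f (y, v) → persp f (y, v) < ⊤ → persp f (y, v) < persp f (y, v')

/-- The upper radial transformation `f^Γ(y) = sup{v > 0 : v ⬝ f(y/v) ≤ 1}` (`sup ∅ = 0`). -/
noncomputable def radial (f : E → ℝ≥0∞) (y : E) : ℝ≥0∞ :=
  ⨆ (v : ℝ) (_ : 0 < v ∧ persp f (y, v) ≤ 1), ENNReal.ofReal v

/-- The Euclidean norm on `E × ℝ`. -/
noncomputable def pnorm (p : E × ℝ) : ℝ := Real.sqrt (‖p.1‖ ^ 2 + p.2 ^ 2)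

/-- `w` is a proximal normal to `S` at `z ∈ S`: `dist(z + ε w, S) = ε ‖w‖` for some `ε > 0`,
with the Euclidean distance on `E × ℝ`. -/
def IsProxNormal (S : Set (E × ℝ)) (z w : E × ℝ) : Prop :=
  z ∈ S ∧ ∃ ε : ℝ, 0 < ε ∧ sInf ((fun q => pnorm (z + ε • w - q)) '' S) = ε * pnorm w

/-- `R(f)`: the infimum of `‖x'‖` over points on hyperplanes induced by proximal normals of
the hypograph (`inf ∅ = ∞`). -/
noncomputable def Rrad (f : E → ℝ≥0∞) : ℝ≥0∞ :=
  ⨅ (x' : E) (_ : ∃ p w, IsProxNormal (hypo f) p w ∧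
    ⟪w.1, x'⟫ = ⟪w.1, p.1⟫ + w.2 * p.2), ENNReal.ofReal ‖x'‖

/-- `D(f) = sup{‖x‖ : 0 < f(x) < ∞}`. -/
noncomputable def Drad (f : E → ℝ≥0∞) : ℝ≥0∞ :=
  ⨆ (x : E) (_ : 0 < f x ∧ f x < ⊤), ENNReal.ofReal ‖x‖

/-- The proximal subdifferential of `f` at `x` (empty unless `f x ∈ (0,∞)`). -/
def subdiffP (f : E → ℝ≥0∞) (x : E) : Set E :=
  {ζ | 0 < f x ∧ f x < ⊤ ∧ IsProxNormal (epigraph f) (x, (f x).toReal) (ζ, -1)}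

/-- The proximal supdifferential of `f` at `x` (empty unless `f x ∈ (0,∞)`). -/
def supdiffP (f : E → ℝ≥0∞) (x : E) : Set E :=
  {ζ | 0 < f x ∧ f x < ⊤ ∧ IsProxNormal (hypo f) (x, (f x).toReal) (-ζ, 1)}

/-- `ζ` is a subgradient of `g` at `y`: `g(z) ≥ g(y) + ⟨ζ, z - y⟩` for all `z`. -/
def IsSubgrad (g : E → ℝ≥0∞) (y ζ : E) : Prop :=
  ∀ z : E, (g y : EReal) + ((⟪ζ, z - y⟫ : ℝ) : EReal) ≤ (g z : EReal)

/-- The Minkowski gauge `γ_S(y) = inf{λ > 0 : y ∈ λ S}` (`inf ∅ = ∞`). -/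
noncomputable def gaugeE (S : Set E) (y : E) : ℝ≥0∞ :=
  ⨅ (lam : ℝ) (_ : 0 < lam ∧ y ∈ lam • S), ENNReal.ofReal lam

/-- The indicator `ι_S` taking value `∞` on `S` and `0` elsewhere. -/
noncomputable def indic (S : Set E) (x : E) : ℝ≥0∞ := S.indicator (fun _ => (⊤ : ℝ≥0∞)) x

/-- for u.s.c. upper radial `f`, every proximal normal `(ζ, δ)` of the
hypograph at `(x, u)` with `ζ ≠ 0` has `R(f)` finite and `⟨ζ, x⟩ + δ u ≥ ‖ζ‖ R(f)`. -/
theorem statement0 (f : E → ℝ≥0∞) (husc : IsUSC f) (hur : UpperRadial f)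
    (x : E) (u : ℝ) (hxu : (x, u) ∈ hypo f) (zeta : E) (delta : ℝ)
    (hN : IsProxNormal (hypo f) (x, u) (zeta, delta)) (hzeta : zeta ≠ 0) :
    Rrad f ≠ ⊤ ∧ ‖zeta‖ * (Rrad f).toReal ≤ ⟪zeta, x⟫ + delta * u := by
  obtain ⟨hz, ε, hε, hinf⟩ := hN
  have hu : 0 < u := hxu.1
  have hpn2 : ∀ p : E × ℝ, pnorm p ^ 2 = ‖p.1‖ ^ 2 + p.2 ^ 2 := by
    intro p; exact Real.sq_sqrt (by positivity)
  -- key inequality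
  have key : ∀ q ∈ hypo f, ⟪zeta, q.1 - x⟫ + delta * (q.2 - u)
      ≤ (‖q.1 - x‖ ^ 2 + (q.2 - u) ^ 2) / (2 * ε) := by
    intro q hq
    have hbdd : BddBelow ((fun q => pnorm ((x, u) + ε • ((zeta, delta) : E × ℝ) - q)) '' hypo f) := by
      refine ⟨0, fun r hr => ?_⟩
      obtain ⟨q, -, rfl⟩ := hr
      exact Real.sqrt_nonneg _
    have hle : ε * pnorm ((zeta, delta) : E × ℝ)
        ≤ pnorm ((x, u) + ε • ((zeta, delta) : E × ℝ) - q) := by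
      rw [← hinf]; exact csInf_le hbdd ⟨q, hq, rfl⟩
    have hcomp : (x, u) + ε • ((zeta, delta) : E × ℝ) - q
        = (x - q.1 + ε • zeta, u - q.2 + ε * delta) := by
      simp [Prod.ext_iff, smul_eq_mul]; constructor <;> [abel; ring]
    rw [hcomp] at hle
    have h0 : (0:ℝ) ≤ ε * pnorm ((zeta, delta) : E × ℝ) :=
      mul_nonneg hε.le (Real.sqrt_nonneg _)
    have hsq := mul_self_le_mul_self h0 hle
    have g1 : pnorm ((zeta, delta) : E × ℝ) * pnorm ((zeta, delta) : E × ℝ)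
        = ‖zeta‖ ^ 2 + delta ^ 2 := Real.mul_self_sqrt (by positivity)
    have g2 : pnorm ((x - q.1 + ε • zeta, u - q.2 + ε * delta) : E × ℝ)
          * pnorm ((x - q.1 + ε • zeta, u - q.2 + ε * delta) : E × ℝ)
        = ‖x - q.1 + ε • zeta‖ ^ 2 + (u - q.2 + ε * delta) ^ 2 :=
      Real.mul_self_sqrt (by positivity)
    have hexp : ‖x - q.1 + ε • zeta‖ ^ 2
        = ‖x - q.1‖ ^ 2 + 2 * (ε * ⟪x - q.1, zeta⟫) + ε ^ 2 * ‖zeta‖ ^ 2 := by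
      rw [norm_add_sq_real, real_inner_smul_right, norm_smul, Real.norm_eq_abs, mul_pow, sq_abs]
    have h1 : ⟪x - q.1, zeta⟫ = -⟪zeta, q.1 - x⟫ := by
      rw [real_inner_comm, inner_sub_right, inner_sub_right]; ring
    have h2 : ‖q.1 - x‖ = ‖x - q.1‖ := norm_sub_rev _ _
    rw [h2, le_div_iff₀ (by positivity)]
    nlinarith [hsq, g1, g2, hexp, h1, hε]
  set A := ⟪zeta, x⟫ + delta * u with hAdef
  -- star-shapedness
  have hstar : ∀ t : ℝ, 0 < t → t ≤ 1 → ((t • x, t * u) : E × ℝ) ∈ hypo f := by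
    intro t ht ht1
    refine ⟨mul_pos ht hu, ?_⟩
    have hm := hur.2 (t • x) t 1 ht ht1
    have e1 : persp f (t • x, t) = ENNReal.ofReal t * f x := by
      simp [persp, smul_smul, inv_mul_cancel₀ ht.ne']
    have e2 : persp f (t • x, 1) = f (t • x) := by simp [persp]
    calc ENNReal.ofReal (t * u) = ENNReal.ofReal t * ENNReal.ofReal u :=
          ENNReal.ofReal_mul ht.le
      _ ≤ ENNReal.ofReal t * f x := mul_le_mul_right hxu.2 _
      _ = persp f (t • x, t) := e1.symm
      _ ≤ persp f (t • x, 1) := hm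
      _ = f (t • x) := e2
  -- nonnegativity of A
  have hA : 0 ≤ A := by
    by_contra h
    push_neg at h
    set K := (‖x‖ ^ 2 + u ^ 2) / (2 * ε) with hKdef
    have hK : 0 ≤ K := by positivity
    have hstep : ∀ s : ℝ, 0 < s → s < 1 → -A ≤ s * K := by
      intro s hs0 hs1
      have ht0 : (0:ℝ) < 1 - s := by linarith
      have hk := key ((1 - s) • x, (1 - s) * u) (hstar (1 - s) ht0 (by linarith))
      simp only at hk
      have e3 : ((1 - s) • x : E) - x = (-s) • x := by
        rw [show (1 - s : ℝ) = -s + 1 by ring, add_smul, one_smul, add_sub_cancel_right]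
      rw [e3, real_inner_smul_right] at hk
      have e5 : ‖(-s) • x‖ ^ 2 = s ^ 2 * ‖x‖ ^ 2 := by
        rw [norm_smul, Real.norm_eq_abs, mul_pow, sq_abs, neg_pow]; ring
      rw [e5] at hk
      have e6 : (s ^ 2 * ‖x‖ ^ 2 + ((1 - s) * u - u) ^ 2) / (2 * ε) = s ^ 2 * K := by
        rw [hKdef]; field_simp; ring
      rw [e6] at hk
      have h5 : s * (-A) ≤ s * (s * K) := by rw [hAdef]; nlinarith [hk]
      exact le_of_mul_le_mul_left h5 hs0
    set s := min (1/2 : ℝ) ((-A) / (2 * (K + 1))) with hsdef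
    have hs0 : 0 < s := lt_min (by norm_num) (div_pos (by linarith) (by linarith))
    have hs1 : s ≤ 1/2 := min_le_left _ _
    have hs2 : s ≤ (-A) / (2 * (K + 1)) := min_le_right _ _
    have h6 := hstep s hs0 (by linarith)
    have h7 : s * (K + 1) ≤ -A / 2 := by
      have h8 : s * (K + 1) ≤ ((-A) / (2 * (K + 1))) * (K + 1) :=
        mul_le_mul_of_nonneg_right hs2 (by linarith)
      have h9 : ((-A) / (2 * (K + 1))) * (K + 1) = -A / 2 := by field_simp
      linarith [h8, h9.le, h9.ge]
    nlinarith [h6, h7, hs0, hK]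
  -- construct x'
  have hzn : (0 : ℝ) < ‖zeta‖ := norm_pos_iff.mpr hzeta
  set x' : E := (A / ‖zeta‖ ^ 2) • zeta with hx'def
  have hip : ⟪zeta, x'⟫ = ⟪zeta, x⟫ + delta * u := by
    rw [hx'def, real_inner_smul_right, real_inner_self_eq_norm_sq, hAdef]
    field_simp
  have hP : ∃ p w, IsProxNormal (hypo f) p w ∧
      ⟪w.1, x'⟫ = ⟪w.1, p.1⟫ + w.2 * p.2 :=
    ⟨(x, u), (zeta, delta), ⟨hz, ε, hε, hinf⟩, hip⟩
  have hR : Rrad f ≤ ENNReal.ofReal ‖x'‖ := by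
    exact le_trans (iInf_le _ x') (iInf_le _ hP)
  have hxn : ‖x'‖ = A / ‖zeta‖ := by
    rw [hx'def, norm_smul, Real.norm_eq_abs, abs_of_nonneg (by positivity)]
    field_simp
  refine ⟨ne_top_of_le_ne_top ENNReal.ofReal_ne_top hR, ?_⟩
  have htr : (Rrad f).toReal ≤ A / ‖zeta‖ := by
    rw [← hxn]
    exact ENNReal.toReal_le_of_le_ofReal (by rw [hxn]; positivity) hR
  calc ‖zeta‖ * (Rrad f).toReal ≤ ‖zeta‖ * (A / ‖zeta‖) := by
        exact mul_le_mul_of_nonneg_left htr hzn.le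
    _ = A := by field_simp
end

section
/- Let a ∈ E and b > 0, and let H = {x ∈ E : ⟨a,x⟩ ≤ b}. Then the upper radial transformation of the indicator of H is linear thresholded at zero: for every y ∈ E, ι_H^Γ(y) = max(⟨a,y⟩/b, 0). -/
open scoped ENNReal RealInnerProductSpace Pointwise
open Metric Set

variable {E : Type*} [NormedAddCommGroup E] [InnerProductSpace ℝ E] [FiniteDimensional ℝ E]

/-- the radial dual of the indicator of a halfspace is a thresholded
linear function. -/
theorem statement14 (a : E) (b : ℝ) (hb : 0 < b) :
    ∀ y : E, radial (indic {x : E | ⟪a, x⟫ ≤ b}) y = ENNReal.ofReal (max (⟪a, y⟫ / b) 0) := by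
  intro y
  set c : ℝ := ⟪a, y⟫ / b with hc
  have hcond : ∀ v : ℝ, 0 < v →
      (persp (indic {x : E | ⟪a, x⟫ ≤ b}) (y, v) ≤ 1 ↔ v < c) := by
    intro v hv
    have hv0 : ENNReal.ofReal v ≠ 0 := by
      simp [ENNReal.ofReal_eq_zero, not_le, hv]
    by_cases hmem : (v⁻¹ • y) ∈ {x : E | ⟪a, x⟫ ≤ b}
    · have : persp (indic {x : E | ⟪a, x⟫ ≤ b}) (y, v) = ⊤ := by
        simp [persp, indic, Set.indicator_of_mem hmem, ENNReal.mul_top hv0]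
      rw [this]
      simp only [top_le_iff]
      constructor
      · intro h; exact absurd h (by simp)
      · intro hvc
        exfalso
        have hmem' : ⟪a, v⁻¹ • y⟫ ≤ b := hmem
        rw [inner_smul_right] at hmem'
        have : v * b < ⟪a, y⟫ := (lt_div_iff₀ hb).mp hvc
        have h2 : b < v⁻¹ * ⟪a, y⟫ := by
          rw [lt_inv_mul_iff₀ hv]; linarith
        linarith
    · have : persp (indic {x : E | ⟪a, x⟫ ≤ b}) (y, v) = 0 := by
        simp [persp, indic, Set.indicator_of_notMem hmem]
      rw [this]
      simp only [zero_le, true_iff]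
      have hmem' : b < ⟪a, v⁻¹ • y⟫ := lt_of_not_ge hmem
      rw [inner_smul_right] at hmem'
      rw [hc, lt_div_iff₀ hb]
      have := (lt_inv_mul_iff₀ hv).mp hmem'
      linarith
  have hset : radial (indic {x : E | ⟪a, x⟫ ≤ b}) y
      = ⨆ (v : ℝ) (_ : 0 < v ∧ v < c), ENNReal.ofReal v := by
    unfold radial
    exact iSup_congr fun v =>
      iSup_congr_Prop (and_congr_right fun hv => hcond v hv) fun _ => rfl
  rw [hset]
  rcases le_or_gt c 0 with hcle | hcpos
  · have : ∀ v : ℝ, ¬ (0 < v ∧ v < c) := by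
      intro v ⟨h1, h2⟩; linarith
    simp only [this, iSup_false, iSup_bot, max_eq_right hcle, ENNReal.ofReal_zero]
    rfl
  · rw [max_eq_left hcpos.le]
    apply le_antisymm
    · exact iSup₂_le fun v hv => ENNReal.ofReal_le_ofReal hv.2.le
    · refine ENNReal.le_of_forall_pos_le_add fun ε hε _ => ?_
      set v : ℝ := max (c - ε) (c / 2) with hvdef
      have hv0 : 0 < v := lt_of_lt_of_le (by linarith) (le_max_right _ _)
      have hvc : v < c := by
        apply max_lt
        · have : (0:ℝ) < ε := hε
          linarith
        · linarith
      calc ENNReal.ofReal c ≤ ENNReal.ofReal (v + ε) := by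
            apply ENNReal.ofReal_le_ofReal
            have : c - ε ≤ v := le_max_left _ _
            linarith
        _ = ENNReal.ofReal v + ENNReal.ofReal ε := by
            rw [ENNReal.ofReal_add hv0.le (by positivity)]
        _ ≤ (⨆ (w : ℝ) (_ : 0 < w ∧ w < c), ENNReal.ofReal w) + ε := by
            gcongr
            · exact le_iSup₂ (f := fun w (_ : 0 < w ∧ w < c) => ENNReal.ofReal w) v ⟨hv0, hvc⟩
            · simp [ENNReal.ofReal_coe_nnreal]
end

section
/- Let Q be a self-adjoint continuous linear operator on E and c ∈ E, and define f : E → [0,∞) by f(x) = max(1 − ⟨x,Qx⟩/2 − ⟨c,x⟩, 0). Then for every y ∈ E: if (⟨c,y⟩+1)² + 2·⟨y,Qy⟩ ≥ 0, then f^Γ(y) = max((⟨c,y⟩ + 1 + √((⟨c,y⟩+1)² + 2·⟨y,Qy⟩))/2, 0); and if (⟨c,y⟩+1)² + 2·⟨y,Qy⟩ < 0, then f^Γ(y) = 0. -/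
open scoped ENNReal RealInnerProductSpace Pointwise
open Metric Set

variable {E : Type*} [NormedAddCommGroup E] [InnerProductSpace ℝ E] [FiniteDimensional ℝ E]

/-!
For `v > 0`, homogeneity gives `v ⬝ f(y/v) = max(v - ⟨c,y⟩ - ⟨y,Qy⟩/(2v), 0)`, so
`v ⬝ f(y/v) ≤ 1` exactly when `v² - (⟨c,y⟩+1) v - ⟨y,Qy⟩/2 ≤ 0`. The positive solutions of this
monic quadratic inequality, whose discriminant is `Δ = (⟨c,y⟩+1)² + 2⟨y,Qy⟩`, are bounded by its
larger root `(⟨c,y⟩ + 1 + √Δ)/2`, which is itself a solution when positive; there are none when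
`Δ < 0`.
-/

section MonicQuadratic

variable {p q v : ℝ}

lemma le_larger_root_of_sq_sub_mul_sub_nonpos (h : v ^ 2 - p * v - q ≤ 0) :
    v ≤ (p + √(p ^ 2 + 4 * q)) / 2 := by
  have hsq : (2 * v - p) ^ 2 ≤ p ^ 2 + 4 * q := by nlinarith
  linarith [le_abs_self (2 * v - p), Real.abs_le_sqrt hsq]

lemma larger_root_isRoot (hd : 0 ≤ p ^ 2 + 4 * q) :
    ((p + √(p ^ 2 + 4 * q)) / 2) ^ 2 - p * ((p + √(p ^ 2 + 4 * q)) / 2) - q = 0 := by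
  have := Real.sq_sqrt hd
  nlinarith

lemma sq_sub_mul_sub_pos_of_discrim_neg (hd : p ^ 2 + 4 * q < 0) : 0 < v ^ 2 - p * v - q := by
  nlinarith [sq_nonneg (2 * v - p)]

lemma iSup_ofReal_of_sq_sub_mul_sub_nonpos (hd : 0 ≤ p ^ 2 + 4 * q) :
    ⨆ (v : ℝ) (_ : 0 < v ∧ v ^ 2 - p * v - q ≤ 0), ENNReal.ofReal v =
      ENNReal.ofReal (max ((p + √(p ^ 2 + 4 * q)) / 2) 0) := by
  set r := (p + √(p ^ 2 + 4 * q)) / 2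
  rw [ENNReal.ofReal_max, ENNReal.ofReal_zero, max_eq_left zero_le]
  refine le_antisymm (iSup₂_le fun v hv ↦ ?_) ?_
  · exact ENNReal.ofReal_le_ofReal (le_larger_root_of_sq_sub_mul_sub_nonpos hv.2)
  · rcases le_or_gt r 0 with hr | hr
    · simp [ENNReal.ofReal_of_nonpos hr]
    · exact le_iSup₂_of_le r ⟨hr, (larger_root_isRoot hd).le⟩ le_rfl

lemma iSup_ofReal_of_sq_sub_mul_sub_nonpos_of_discrim_neg (hd : p ^ 2 + 4 * q < 0) :
    ⨆ (v : ℝ) (_ : 0 < v ∧ v ^ 2 - p * v - q ≤ 0), ENNReal.ofReal v = 0 :=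
  nonpos_iff_eq_zero.mp <| iSup₂_le fun _ hv ↦
    absurd hv.2 (sq_sub_mul_sub_pos_of_discrim_neg hd).not_ge

end MonicQuadratic

omit [FiniteDimensional ℝ E] in
lemma persp_le_one_iff_of_quadratic {Q : E →L[ℝ] E} {c : E} {f : E → ℝ≥0∞}
    (hf : ∀ x : E, f x = ENNReal.ofReal (max (1 - ⟪x, Q x⟫ / 2 - ⟪c, x⟫) 0)) (y : E) {v : ℝ}
    (hv : 0 < v) :
    persp f (y, v) ≤ 1 ↔ v ^ 2 - (⟪c, y⟫ + 1) * v - ⟪y, Q y⟫ / 2 ≤ 0 := by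
  rw [persp, hf, ← ENNReal.ofReal_mul hv.le, ENNReal.ofReal_le_one, mul_max_of_nonneg _ _ hv.le,
    mul_zero, max_le_iff, and_iff_left zero_le_one]
  simp only [map_smul, real_inner_smul_left, real_inner_smul_right]
  have hscale : v * (1 - v⁻¹ * (v⁻¹ * ⟪y, Q y⟫) / 2 - v⁻¹ * ⟪c, y⟫) =
      (v ^ 2 - ⟪c, y⟫ * v - ⟪y, Q y⟫ / 2) / v := by
    field_simp
    ring
  rw [hscale, div_le_one hv]
  constructor <;> intro h <;> linarith

omit [FiniteDimensional ℝ E] in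
lemma radial_eq_iSup_of_quadratic {Q : E →L[ℝ] E} {c : E} {f : E → ℝ≥0∞}
    (hf : ∀ x : E, f x = ENNReal.ofReal (max (1 - ⟪x, Q x⟫ / 2 - ⟪c, x⟫) 0)) (y : E) :
    radial f y = ⨆ (v : ℝ) (_ : 0 < v ∧ v ^ 2 - (⟪c, y⟫ + 1) * v - ⟪y, Q y⟫ / 2 ≤ 0),
      ENNReal.ofReal v := by
  refine iSup_congr fun v ↦ iSup_congr_Prop ?_ fun _ ↦ rfl
  exact and_congr_right (persp_le_one_iff_of_quadratic hf y)

theorem statement15_general (Q : E →L[ℝ] E) (c : E)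
    (f : E → ℝ≥0∞)
    (hf : ∀ x : E, f x = ENNReal.ofReal (max (1 - ⟪x, Q x⟫ / 2 - ⟪c, x⟫) 0)) :
    ∀ y : E,
      (0 ≤ (⟪c, y⟫ + 1) ^ 2 + 2 * ⟪y, Q y⟫ →
        radial f y = ENNReal.ofReal
          (max ((⟪c, y⟫ + 1 + Real.sqrt ((⟪c, y⟫ + 1) ^ 2 + 2 * ⟪y, Q y⟫)) / 2) 0)) ∧
      ((⟪c, y⟫ + 1) ^ 2 + 2 * ⟪y, Q y⟫ < 0 → radial f y = 0) := by
  intro y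
  have hdiscrim : (⟪c, y⟫ + 1) ^ 2 + 4 * (⟪y, Q y⟫ / 2) = (⟪c, y⟫ + 1) ^ 2 + 2 * ⟪y, Q y⟫ := by
    ring
  rw [radial_eq_iSup_of_quadratic hf y, ← hdiscrim]
  exact ⟨iSup_ofReal_of_sq_sub_mul_sub_nonpos,
    iSup_ofReal_of_sq_sub_mul_sub_nonpos_of_discrim_neg⟩

/-- closed form of the radial dual of a (possibly nonconcave)
quadratic objective. -/
theorem statement15 (Q : E →L[ℝ] E) (hQ : ∀ u w : E, ⟪Q u, w⟫ = ⟪u, Q w⟫) (c : E)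
    (f : E → ℝ≥0∞)
    (hf : ∀ x : E, f x = ENNReal.ofReal (max (1 - ⟪x, Q x⟫ / 2 - ⟪c, x⟫) 0)) :
    ∀ y : E,
      (0 ≤ (⟪c, y⟫ + 1) ^ 2 + 2 * ⟪y, Q y⟫ →
        radial f y = ENNReal.ofReal
          (max ((⟪c, y⟫ + 1 + Real.sqrt ((⟪c, y⟫ + 1) ^ 2 + 2 * ⟪y, Q y⟫)) / 2) 0)) ∧
      ((⟪c, y⟫ + 1) ^ 2 + 2 * ⟪y, Q y⟫ < 0 → radial f y = 0) :=
  statement15_general Q c f hf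
end

section
/- Let Q be a self-adjoint continuous linear operator on E and define f : E → [0,∞) by f(x) = √(max(1 − ⟨x,Qx⟩, 0)). Then f is upper radial, and its upper radial transformation is f^Γ(y) = √(max(1 + ⟨y,Qy⟩, 0)) for every y ∈ E. -/
/-!
Because `x ↦ ⟪x, Q x⟫` is homogeneous of degree two, the perspective of `f` is
`(y, v) ↦ √(v² - ⟪y, Q y⟫)₊` for `v > 0`: it is continuous, and nondecreasing in `v`.
Moreover `v ⬝ f(y / v) ≤ 1` holds exactly when `v² ≤ 1 + ⟪y, Q y⟫`, and the supremum of
the positive such `v` is `√(1 + ⟪y, Q y⟫)₊`.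
-/

open scoped ENNReal RealInnerProductSpace Pointwise
open Metric Set

variable {E : Type*} [NormedAddCommGroup E] [InnerProductSpace ℝ E] [FiniteDimensional ℝ E]

theorem ofReal_sqrt_max_le_one_iff {a : ℝ} : ENNReal.ofReal √(max a 0) ≤ 1 ↔ a ≤ 1 := by
  rw [ENNReal.ofReal_le_one, Real.sqrt_le_one, max_le_iff]
  exact and_iff_left zero_le_one

theorem iSup_ofReal_of_sq_le (a : ℝ) :
    ⨆ (v : ℝ) (_ : 0 < v ∧ v ^ 2 ≤ a), ENNReal.ofReal v = ENNReal.ofReal √(max a 0) := by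
  refine le_antisymm (iSup₂_le fun v ⟨hv, hva⟩ => ?_) ?_
  · exact ENNReal.ofReal_le_ofReal (Real.le_sqrt_of_sq_le (hva.trans (le_max_left a 0)))
  · rcases le_or_gt a 0 with ha | ha
    · simp [max_eq_right ha]
    · rw [max_eq_left ha.le]
      exact le_iSup₂_of_le (√a) ⟨Real.sqrt_pos.2 ha, (Real.sq_sqrt ha.le).le⟩ le_rfl

section

omit [FiniteDimensional ℝ E]

variable {q : E → ℝ} {f : E → ℝ≥0∞}

theorem inner_smul_apply_smul (Q : E →L[ℝ] E) (c : ℝ) (x : E) :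
    ⟪c • x, Q (c • x)⟫ = c ^ 2 * ⟪x, Q x⟫ := by
  rw [map_smul, real_inner_smul_left, real_inner_smul_right]
  ring

theorem persp_sqrt_one_sub (hq : ∀ (c : ℝ) (x : E), q (c • x) = c ^ 2 * q x)
    (hf : ∀ x, f x = ENNReal.ofReal √(max (1 - q x) 0)) (y : E) {v : ℝ} (hv : 0 < v) :
    persp f (y, v) = ENNReal.ofReal √(max (v ^ 2 - q y) 0) := by
  have hscale : v ^ 2 * max (1 - q (v⁻¹ • y)) 0 = max (v ^ 2 - q y) 0 := by
    rw [mul_max_of_nonneg _ _ (sq_nonneg v), mul_zero, hq, mul_sub, ← mul_assoc, ← mul_pow,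
      mul_inv_cancel₀ hv.ne', one_pow, one_mul, mul_one]
  rw [persp, hf, ← ENNReal.ofReal_mul hv.le, ← hscale, Real.sqrt_mul (sq_nonneg v),
    Real.sqrt_sq hv.le]

theorem upperRadial_sqrt_one_sub (hq : ∀ (c : ℝ) (x : E), q (c • x) = c ^ 2 * q x)
    (hqc : Continuous q) (hf : ∀ x, f x = ENNReal.ofReal √(max (1 - q x) 0)) :
    UpperRadial f := by
  refine ⟨?_, fun y v v' hv hvv' => ?_⟩
  · have hcont : Continuous fun p : E × ℝ => ENNReal.ofReal √(max (p.2 ^ 2 - q p.1) 0) :=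
      ENNReal.continuous_ofReal.comp (by fun_prop)
    exact (hcont.continuousOn.congr fun p hp =>
      persp_sqrt_one_sub hq hf p.1 hp).upperSemicontinuousOn
  · rw [persp_sqrt_one_sub hq hf y hv, persp_sqrt_one_sub hq hf y (hv.trans_le hvv')]
    gcongr

theorem radial_sqrt_one_sub (hq : ∀ (c : ℝ) (x : E), q (c • x) = c ^ 2 * q x)
    (hf : ∀ x, f x = ENNReal.ofReal √(max (1 - q x) 0)) (y : E) :
    radial f y = ENNReal.ofReal √(max (1 + q y) 0) := by
  rw [← iSup_ofReal_of_sq_le]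
  refine iSup_congr fun v => iSup_congr_Prop ?_ fun _ => rfl
  refine and_congr_right fun hv => ?_
  rw [persp_sqrt_one_sub hq hf y hv, ofReal_sqrt_max_le_one_iff, sub_le_iff_le_add]

end

theorem statement16_general (Q : E →L[ℝ] E)
    (f : E → ℝ≥0∞)
    (hf : ∀ x : E, f x = ENNReal.ofReal (Real.sqrt (max (1 - ⟪x, Q x⟫) 0))) :
    UpperRadial f ∧
    ∀ y : E, radial f y = ENNReal.ofReal (Real.sqrt (max (1 + ⟪y, Q y⟫) 0)) :=
  ⟨upperRadial_sqrt_one_sub (inner_smul_apply_smul Q) (by fun_prop) hf,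
    radial_sqrt_one_sub (inner_smul_apply_smul Q) hf⟩

/-- `√(1 - ⟨x,Qx⟩)₊` is upper radial with radial dual `√(1 + ⟨y,Qy⟩)₊`. -/
theorem statement16 (Q : E →L[ℝ] E) (hQ : ∀ u w : E, ⟪Q u, w⟫ = ⟪u, Q w⟫)
    (f : E → ℝ≥0∞)
    (hf : ∀ x : E, f x = ENNReal.ofReal (Real.sqrt (max (1 - ⟪x, Q x⟫) 0))) :
    UpperRadial f ∧
    ∀ y : E, radial f y = ENNReal.ofReal (Real.sqrt (max (1 + ⟪y, Q y⟫) 0)) :=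
  statement16_general Q f hf
end

section
/- Let Q be a self-adjoint continuous linear operator on E, c ∈ E, a_1,…,a_m ∈ E and b_1,…,b_m > 0, and let P = {x ∈ E : ⟨a_i,x⟩ ≤ b_i for all i}. Define F : E → [0,∞] by F(x) = max(1 − ⟨x,Qx⟩/2 − ⟨c,x⟩, 0) if x ∈ P and F(x) = 0 otherwise. If every x ∈ P satisfies ⟨x,Qx⟩ > −2, then F is strictly upper radial. -/
open scoped ENNReal RealInnerProductSpace Pointwise
open Metric Set

variable {E : Type*} [NormedAddCommGroup E] [InnerProductSpace ℝ E] [FiniteDimensional ℝ E]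

omit [FiniteDimensional ℝ E] in
private lemma s17_inner_smul (Q : E →L[ℝ] E) (y : E) (v : ℝ) :
    ⟪v⁻¹ • y, Q (v⁻¹ • y)⟫ = ⟪y, Q y⟫ / v ^ 2 := by
  rw [map_smul, real_inner_smul_left, real_inner_smul_right, ← mul_assoc, ← mul_inv, ← sq,
    inv_mul_eq_div]

private lemma s17_ineq (qv v v' : ℝ) (hv : 0 < v) (hvv : v ≤ v') (hq : -2 * v ^ 2 < qv) :
    v - qv / (2 * v) ≤ v' - qv / (2 * v') := by
  have hv' : 0 < v' := lt_of_lt_of_le hv hvv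
  have h0 : 0 ≤ 4 * v * v' + 2 * qv := by nlinarith [mul_pos hv hv']
  have key : qv / (2 * v') - qv / (2 * v) ≤ v' - v := by
    rw [div_sub_div _ _ (by positivity : (2:ℝ) * v' ≠ 0) (by positivity : (2:ℝ) * v ≠ 0),
      div_le_iff₀ (by positivity)]
    nlinarith [mul_nonneg (sub_nonneg.2 hvv) h0]
  linarith

private lemma s17_ineq_strict (qv v v' : ℝ) (hv : 0 < v) (hvv : v < v') (hq : -2 * v ^ 2 < qv) :
    v - qv / (2 * v) < v' - qv / (2 * v') := by
  have hv' : 0 < v' := lt_trans hv hvv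
  have h0 : 0 < 4 * v * v' + 2 * qv := by nlinarith [mul_pos hv hv']
  have key : qv / (2 * v') - qv / (2 * v) < v' - v := by
    rw [div_sub_div _ _ (by positivity : (2:ℝ) * v' ≠ 0) (by positivity : (2:ℝ) * v ≠ 0),
      div_lt_iff₀ (by positivity)]
    nlinarith [mul_pos (sub_pos.2 hvv) h0]
  linarith


/-- a quadratic objective over a polyhedron with `⟨x,Qx⟩ > -2` on the
feasible region is strictly upper radial. -/
theorem statement17 (m : ℕ) (Q : E →L[ℝ] E) (hQ : ∀ u w : E, ⟪Q u, w⟫ = ⟪u, Q w⟫)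
    (c : E) (a : Fin m → E) (b : Fin m → ℝ) (hb : ∀ i, 0 < b i)
    (F : E → ℝ≥0∞)
    (hF : ∀ x : E, F x = if ∀ i, ⟪a i, x⟫ ≤ b i then
      ENNReal.ofReal (max (1 - ⟪x, Q x⟫ / 2 - ⟪c, x⟫) 0) else 0)
    (hQbd : ∀ x : E, (∀ i, ⟪a i, x⟫ ≤ b i) → -2 < ⟪x, Q x⟫) :
    StrictlyUpperRadial F := by
  classical
  set C : Set (E × ℝ) := {p | ∀ i, ⟪a i, p.1⟫ ≤ p.2 * b i} with hCdef
  set g : E × ℝ → ℝ := fun p => p.2 - ⟪p.1, Q p.1⟫ / (2 * p.2) - ⟪c, p.1⟫ with hgdef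
  set h : E × ℝ → ℝ := C.indicator (fun p => max (g p) 0) with hhdef
  -- feasibility equivalence
  have hfeas : ∀ (y : E) (v : ℝ), 0 < v →
      ((∀ i, ⟪a i, v⁻¹ • y⟫ ≤ b i) ↔ (y, v) ∈ C) := by
    intro y v hv
    constructor
    · intro hcond i
      have := hcond i
      rw [real_inner_smul_right, inv_mul_le_iff₀ hv] at this
      simpa [hCdef, mul_comm] using this
    · intro hc i
      have := hc i
      rw [real_inner_smul_right, inv_mul_le_iff₀ hv]
      simpa [mul_comm] using this
  have hnonneg : ∀ p, 0 ≤ h p := by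
    intro p
    rw [hhdef]
    by_cases hp : p ∈ C
    · rw [Set.indicator_of_mem hp]; exact le_max_right _ _
    · rw [Set.indicator_of_notMem hp]
  -- key: persp F = ofReal ∘ h on {v > 0}
  have key : ∀ (y : E) (v : ℝ), 0 < v → persp F (y, v) = ENNReal.ofReal (h (y, v)) := by
    intro y v hv
    show ENNReal.ofReal v * F (v⁻¹ • y) = _
    rw [hF]
    by_cases hc : (y, v) ∈ C
    · rw [if_pos ((hfeas y v hv).2 hc), hhdef, Set.indicator_of_mem hc,
        ← ENNReal.ofReal_mul hv.le]
      congr 1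
      rw [s17_inner_smul, real_inner_smul_right, inv_mul_eq_div,
        mul_max_of_nonneg _ _ hv.le, mul_zero]
      congr 1
      rw [hgdef]
      have hv0 : v ≠ 0 := ne_of_gt hv
      field_simp
    · rw [if_neg (fun hcond => hc ((hfeas y v hv).1 hcond)), mul_zero, hhdef,
        Set.indicator_of_notMem hc, ENNReal.ofReal_zero]
  -- the quadratic bound in scaled form
  have hqbd' : ∀ (y : E) (v : ℝ), 0 < v → (y, v) ∈ C → -2 * v ^ 2 < ⟪y, Q y⟫ := by
    intro y v hv hc
    have := hQbd (v⁻¹ • y) ((hfeas y v hv).2 hc)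
    rw [s17_inner_smul, lt_div_iff₀ (by positivity : (0:ℝ) < v ^ 2)] at this
    linarith
  -- monotonicity of h
  have hmono : ∀ (y : E) (v v' : ℝ), 0 < v → v ≤ v' → h (y, v) ≤ h (y, v') := by
    intro y v v' hv hvv
    by_cases hc : (y, v) ∈ C
    · have hc' : (y, v') ∈ C := fun i =>
        (hc i).trans (mul_le_mul_of_nonneg_right hvv (hb i).le)
      rw [hhdef, Set.indicator_of_mem hc, Set.indicator_of_mem hc']
      have : g (y, v) ≤ g (y, v') := by
        have := s17_ineq ⟪y, Q y⟫ v v' hv hvv (hqbd' y v hv hc)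
        simp only [hgdef]
        linarith
      exact max_le_max this le_rfl
    · rw [hhdef, Set.indicator_of_notMem hc]
      exact hnonneg _
  have hCclosed : IsClosed C := by
    have : C = ⋂ i, {p : E × ℝ | ⟪a i, p.1⟫ ≤ p.2 * b i} := by
      ext p; simp [hCdef, Set.mem_iInter]
    rw [this]
    exact isClosed_iInter fun i =>
      isClosed_le (Continuous.inner continuous_const continuous_fst)
        (continuous_snd.mul continuous_const)
  refine ⟨⟨?_, ?_⟩, ?_⟩
  · -- USC
    intro x hx
    have hx2 : 0 < x.2 := hx
    intro t ht
    have hmem : ∀ᶠ p in nhdsWithin x {p : E × ℝ | 0 < p.2}, persp F p = ENNReal.ofReal (h p) := by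
      filter_upwards [self_mem_nhdsWithin] with p hp
      exact key p.1 p.2 hp
    rw [key x.1 x.2 hx2] at ht
    -- reduce to real bound
    rcases eq_or_ne t ⊤ with rfl | htop
    · filter_upwards [hmem] with p hp
      rw [hp]; exact ENNReal.ofReal_lt_top
    · set r : ℝ := t.toReal with hr
      have htr : t = ENNReal.ofReal r := (ENNReal.ofReal_toReal htop).symm
      rw [htr] at ht ⊢
      have hxr : h x < r := by
        rw [ENNReal.ofReal_lt_ofReal_iff_of_nonneg (hnonneg x)] at ht
        exact ht
      have hrpos : 0 < r := lt_of_le_of_lt (hnonneg x) hxr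
      have hreal : ∀ᶠ p in nhdsWithin x {p : E × ℝ | 0 < p.2}, h p < r := by
        by_cases hc : x ∈ C
        · have hgc : ContinuousAt g x := by
            have c1 : ContinuousAt (fun p : E × ℝ => ⟪p.1, Q p.1⟫) x :=
              (Continuous.inner continuous_fst (Q.continuous.comp continuous_fst)).continuousAt
            have c2 : ContinuousAt (fun p : E × ℝ => (2:ℝ) * p.2) x :=
              (continuous_const.mul continuous_snd).continuousAt
            have c3 : ContinuousAt (fun p : E × ℝ => ⟪c, p.1⟫) x :=
              (Continuous.inner continuous_const continuous_fst).continuousAt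
            exact (continuousAt_snd.sub (c1.div c2 (by positivity))).sub c3
        -- continuity of max g 0
          have hφ : ContinuousAt (fun p => max (g p) 0) x := hgc.max continuousAt_const
          have hxval : h x = max (g x) 0 := by rw [hhdef]; exact Set.indicator_of_mem hc _
          have hev : ∀ᶠ p in nhds x, max (g p) 0 < r :=
            hφ.eventually_lt continuousAt_const (by rw [← hxval]; exact hxr)
          apply Filter.Eventually.filter_mono nhdsWithin_le_nhds
          filter_upwards [hev] with p hp
          calc h p ≤ max (g p) 0 := by
                rw [hhdef]
                by_cases hpc : p ∈ C
                · rw [Set.indicator_of_mem hpc]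
                · rw [Set.indicator_of_notMem hpc]; exact le_max_right _ _
            _ < r := hp
        · have : ∀ᶠ p in nhds x, p ∈ Cᶜ := hCclosed.isOpen_compl.eventually_mem hc
          apply Filter.Eventually.filter_mono nhdsWithin_le_nhds
          filter_upwards [this] with p hp
          rw [hhdef, Set.indicator_of_notMem hp]
          exact hrpos
      filter_upwards [hmem, hreal] with p hp1 hp2
      rw [hp1]
      exact (ENNReal.ofReal_lt_ofReal_iff hrpos).2 hp2
  · -- monotone
    intro y v v' hv hvv
    rw [key y v hv, key y v' (lt_of_lt_of_le hv hvv)]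
    exact ENNReal.ofReal_le_ofReal (hmono y v v' hv hvv)
  · -- strict
    intro y v v' hv hvv hpos _
    have hv' : 0 < v' := lt_trans hv hvv
    rw [key y v hv] at hpos ⊢
    rw [key y v' hv']
    have hhpos : 0 < h (y, v) := ENNReal.ofReal_pos.1 hpos
    have hc : (y, v) ∈ C := by
      by_contra hc
      rw [hhdef, Set.indicator_of_notMem hc] at hhpos
      exact lt_irrefl _ hhpos
    have hc' : (y, v') ∈ C := fun i =>
      (hc i).trans (mul_le_mul_of_nonneg_right hvv.le (hb i).le)
    have hgpos : 0 < g (y, v) := by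
      rw [hhdef, Set.indicator_of_mem hc] at hhpos
      by_contra hle
      push_neg at hle
      rw [max_eq_right hle] at hhpos
      exact lt_irrefl _ hhpos
    have hgg : g (y, v) < g (y, v') := by
      have := s17_ineq_strict ⟪y, Q y⟫ v v' hv hvv (hqbd' y v hv hc)
      simp only [hgdef]; linarith
    have h1 : h (y, v) = g (y, v) := by
      rw [hhdef, Set.indicator_of_mem hc, max_eq_left hgpos.le]
    have h2 : h (y, v') = g (y, v') := by
      rw [hhdef, Set.indicator_of_mem hc', max_eq_left (le_of_lt (hgpos.trans hgg))]
    rw [h1, h2]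
    exact (ENNReal.ofReal_lt_ofReal_iff (hgpos.trans hgg)).2 hgg
end

section
/- Let f : E → [0,∞] be upper semicontinuous and strictly upper radial, let s > 0 and D ≥ 0, and suppose every x ∈ E with f(x) ≥ s satisfies ‖x‖ ≤ D. Then every y ∈ E with f^Γ(y) ≤ 1/s satisfies ‖y‖ ≤ D/s. -/
/-! If `‖y‖ > D / s`, then `‖s • y‖ > D`, so `f (s • y) < s` and the perspective of `f` at
`(y, 1 / s)` is `< 1`. Upper semicontinuity of the perspective keeps it `< 1` at some `v > 1 / s`,
and then `f^Γ(y) ≥ v > 1 / s`. -/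

open scoped ENNReal RealInnerProductSpace Pointwise
open Metric Set

variable {E : Type*} [NormedAddCommGroup E] [InnerProductSpace ℝ E] [FiniteDimensional ℝ E]

open Filter Topology

section

variable {V : Type*} [NormedAddCommGroup V] [InnerProductSpace ℝ V]

theorem persp_lt_one_iff (f : V → ℝ≥0∞) (y : V) {v : ℝ} (hv : 0 < v) :
    persp f (y, v) < 1 ↔ f (v⁻¹ • y) < ENNReal.ofReal v⁻¹ := by
  have hv_ne : ENNReal.ofReal v ≠ 0 := (ENNReal.ofReal_pos.mpr hv).ne'
  have hcancel : ENNReal.ofReal v * ENNReal.ofReal v⁻¹ = 1 := by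
    rw [← ENNReal.ofReal_mul hv.le, mul_inv_cancel₀ hv.ne', ENNReal.ofReal_one]
  rw [persp, ← hcancel, ENNReal.mul_lt_mul_iff_right hv_ne ENNReal.ofReal_ne_top]

theorem ofReal_le_radial (f : V → ℝ≥0∞) (y : V) {v : ℝ} (hv : 0 < v)
    (hpersp : persp f (y, v) ≤ 1) : ENNReal.ofReal v ≤ radial f y :=
  le_iSup₂ (f := fun (v : ℝ) (_ : 0 < v ∧ persp f (y, v) ≤ 1) => ENNReal.ofReal v) v ⟨hv, hpersp⟩

theorem ofReal_lt_radial_of_persp_lt_one (f : V → ℝ≥0∞)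
    (husc : UpperSemicontinuousOn (persp f) {p : V × ℝ | 0 < p.2}) (y : V) {v : ℝ} (hv : 0 < v)
    (hpersp : persp f (y, v) < 1) : ENNReal.ofReal v < radial f y := by
  have hopen : IsOpen {p : V × ℝ | 0 < p.2} := isOpen_lt continuous_const continuous_snd
  have hmem : (y, v) ∈ {p : V × ℝ | 0 < p.2} := hv
  have hnear : ∀ᶠ p in 𝓝 (y, v), persp f p < 1 := by
    simpa only [nhdsWithin_eq_nhds.mpr (hopen.mem_nhds hmem)] using husc (y, v) hmem 1 hpersp
  have hline : ∀ᶠ t in 𝓝[>] v, persp f (y, t) < 1 ∧ v < t :=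
    ((Continuous.prodMk_right y).continuousAt.eventually hnear).filter_mono nhdsWithin_le_nhds
      |>.and self_mem_nhdsWithin
  obtain ⟨t, hpt, hvt⟩ := hline.exists
  calc ENNReal.ofReal v < ENNReal.ofReal t := (ENNReal.ofReal_lt_ofReal_iff (hv.trans hvt)).mpr hvt
    _ ≤ radial f y := ofReal_le_radial f y (hv.trans hvt) hpt.le

end

theorem statement18_general (f : E → ℝ≥0∞) (hsur : StrictlyUpperRadial f)
    (s D : ℝ) (hs : 0 < s)
    (hlev : ∀ x : E, ENNReal.ofReal s ≤ f x → ‖x‖ ≤ D) :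
    ∀ y : E, radial f y ≤ ENNReal.ofReal (1 / s) → ‖y‖ ≤ D / s := by
  intro y hy
  by_contra! hgt
  have hsy : D < ‖s • y‖ := by
    rw [norm_smul, Real.norm_eq_abs, abs_of_pos hs]
    exact (div_lt_iff₀' hs).mp hgt
  have hf : f (s⁻¹⁻¹ • y) < ENNReal.ofReal s⁻¹⁻¹ := by
    rw [inv_inv]
    exact lt_of_not_ge fun h => hsy.not_ge (hlev _ h)
  have hpersp := (persp_lt_one_iff f y (inv_pos.mpr hs)).mpr hf
  have hlt := ofReal_lt_radial_of_persp_lt_one f hsur.1.1 y (inv_pos.mpr hs) hpersp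
  exact (hlt.trans_le (one_div s ▸ hy)).false

/-- bounded super-level sets of `f` bound sub-level sets of `f^Γ`. -/
theorem statement18 (f : E → ℝ≥0∞) (husc : IsUSC f) (hsur : StrictlyUpperRadial f)
    (s D : ℝ) (hs : 0 < s) (hD : 0 ≤ D)
    (hlev : ∀ x : E, ENNReal.ofReal s ≤ f x → ‖x‖ ≤ D) :
    ∀ y : E, radial f y ≤ ENNReal.ofReal (1 / s) → ‖y‖ ≤ D / s :=
  statement18_general f hsur s D hs hlev
end
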